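/- Let r be an integer with r ≡ -1, -2, or 3 (mod 9) and r ≡ 2, 1, or -2 (mod 7), and set m = 16r - 2, n = m - 3, k = 7, l = 10. Then: (1) m and l are even while n and k are odd, and m - l = n - k; (2) 2 divides both C(m, m-l+1) and C(n, n-k+1), but 4 divides neither; (3) C(n, n-k+1) divides C(m, m-l+1). -/

import Mathlib

/-!
Put `t = 16r - 11 = m - l + 1 = n - k + 1`, so the two binomials are `C(t+9, 9)` and `C(t+6, 6)`,
and they are related by `9! C(t+9, 9) = 6! C(t+6, 6) (t+7)(t+8)(t+9)`.
The congruences on `r` say that `7` and `9` divide `(t+7)(t+8)(t+9)`, and `t ≡ 5 (mod 16)` makes `8`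
divide it, so `7·8·9 ∣ (t+7)(t+8)(t+9)` and `C(t+6, 6) ∣ C(t+9, 9)`.
Counting factors of `2` in `6! C(t+6, 6) = (t+1)⋯(t+6)` shows `C(t+6, 6) ≡ 2 (mod 4)`, and the
relation above, whose remaining factors carry exactly as many `2`s as `9!/6! = 504`, transfers this
to `C(t+9, 9)`.
-/

open Nat

theorem Nat.factorial_mul_choose_add_add (t k j : ℕ) :
    (k + j)! * (t + (k + j)).choose (k + j) =
      k ! * (t + k).choose k * (t + k + 1).ascFactorial j := by
  rw [← ascFactorial_eq_factorial_mul_choose, ← ascFactorial_eq_factorial_mul_choose,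
    ← ascFactorial_mul_ascFactorial, add_right_comm]

theorem Nat.choose_dvd_choose_add_add {t k j : ℕ}
    (h : (k + 1).ascFactorial j ∣ (t + k + 1).ascFactorial j) :
    (t + k).choose k ∣ (t + (k + j)).choose (k + j) := by
  obtain ⟨q, hq⟩ := h
  refine ⟨q, Nat.eq_of_mul_eq_mul_left (mul_pos (factorial_pos k) (ascFactorial_pos k j)) ?_⟩
  rw [factorial_mul_ascFactorial, factorial_mul_choose_add_add, hq, ← factorial_mul_ascFactorial]
  ring

theorem Nat.mod_four_eq_two_of_mul_eq_mul {a b N M : ℕ} (ha : Odd a) (hb : Odd b)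
    (h : a * N = b * M) (hM : M % 4 = 2) : N % 4 = 2 := by
  rw [Nat.odd_iff] at ha hb
  have h4 := congrArg (· % 4) h
  simp only [Nat.mul_mod a, Nat.mul_mod b, hM] at h4
  rcases (by omega : a % 4 = 1 ∨ a % 4 = 3) with ha4 | ha4 <;>
    rcases (by omega : b % 4 = 1 ∨ b % 4 = 3) with hb4 | hb4 <;>
    simp only [ha4, hb4] at h4 <;> omega

theorem choose_add_six_six_mod_four {t : ℕ} (ht : t % 16 = 5) : (t + 6).choose 6 % 4 = 2 := by
  obtain ⟨s, rfl⟩ : ∃ s, t = 16 * s + 5 := ⟨t / 16, by omega⟩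
  have hasc := ascFactorial_eq_factorial_mul_choose (16 * s + 5) 6
  rw [show (6)! = 720 from rfl] at hasc
  simp only [ascFactorial_succ, ascFactorial_zero] at hasc
  refine Nat.mod_four_eq_two_of_mul_eq_mul (a := 45) (M := 2)
    (b := (16 * s + 11) * (8 * s + 5) * (16 * s + 9) * (2 * s + 1) * (16 * s + 7) * (8 * s + 3))
    (by decide) ?_ ?_ rfl
  · simp [Nat.odd_mul, Nat.odd_add, parity_simps]
  · apply Nat.eq_of_mul_eq_mul_left (by norm_num : 0 < 16)
    linear_combination hasc.symm

theorem choose_add_nine_nine_mod_four {t : ℕ} (ht : t % 16 = 5) : (t + 9).choose 9 % 4 = 2 := by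
  have hrel := factorial_mul_choose_add_add t 6 3
  rw [show (6 + 3)! = 362880 from rfl, show (6)! = 720 from rfl] at hrel
  simp only [ascFactorial_succ, ascFactorial_zero] at hrel
  obtain ⟨s, rfl⟩ : ∃ s, t = 16 * s + 5 := ⟨t / 16, by omega⟩
  refine Nat.mod_four_eq_two_of_mul_eq_mul (a := 63)
    (b := (4 * s + 3) * (16 * s + 13) * (8 * s + 7)) (by decide) ?_ ?_ (choose_add_six_six_mod_four ht)
  · simp [Nat.odd_mul, Nat.odd_add, parity_simps]
  · apply Nat.eq_of_mul_eq_mul_left (by norm_num : 0 < 5760)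
    linear_combination hrel

theorem ascFactorial_seven_three_dvd {t : ℕ} (h4 : t % 4 = 1)
    (h9 : 9 ∣ t + 7 ∨ 9 ∣ t + 8 ∨ 9 ∣ t + 9) (h7 : 7 ∣ t + 7 ∨ 7 ∣ t + 8 ∨ 7 ∣ t + 9) :
    (7 : ℕ).ascFactorial 3 ∣ (t + 7).ascFactorial 3 := by
  have hdvd_of_dvd_factor (d : ℕ) (hd : d ∣ t + 7 ∨ d ∣ t + 8 ∨ d ∣ t + 9) :
      d ∣ (t + 7) * (t + 8) * (t + 9) := by
    rcases hd with hd | hd | hd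
    · exact (hd.mul_right _).mul_right _
    · exact (hd.mul_left _).mul_right _
    · exact hd.mul_left _
  have h8 : 8 ∣ (t + 7) * (t + 8) * (t + 9) := by
    obtain ⟨u, rfl⟩ : ∃ u, t = 4 * u + 1 := ⟨t / 4, by omega⟩
    exact ⟨(u + 2) * (4 * u + 9) * (2 * u + 5), by ring⟩
  simp only [ascFactorial_succ, ascFactorial_zero]
  convert (Nat.Coprime.mul_dvd_of_dvd_of_dvd (by norm_num) (Nat.Coprime.mul_dvd_of_dvd_of_dvd
    (by norm_num) (hdvd_of_dvd_factor 7 h7) h8) (hdvd_of_dvd_factor 9 h9)) using 1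
  ring

theorem statement3_general (r : ℕ)
    (h9 : r % 9 = 8 ∨ r % 9 = 7 ∨ r % 9 = 3)
    (h7 : r % 7 = 2 ∨ r % 7 = 1 ∨ r % 7 = 5)
    (m n k l : ℕ) (hm : m = 16 * r - 2) (hn : n = m - 3) (hk : k = 7) (hl : l = 10) :
    (Even m ∧ Even l ∧ Odd n ∧ Odd k ∧ m - l = n - k) ∧
    (2 ∣ Nat.choose m (m - l + 1) ∧ 2 ∣ Nat.choose n (n - k + 1) ∧
      ¬ 4 ∣ Nat.choose m (m - l + 1) ∧ ¬ 4 ∣ Nat.choose n (n - k + 1)) ∧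
    Nat.choose n (n - k + 1) ∣ Nat.choose m (m - l + 1) := by
  set t := 16 * r - 11
  have h16 : t % 16 = 5 := by omega
  obtain rfl : m = t + 9 := by omega
  obtain rfl : n = t + 6 := by omega
  subst hk hl
  rw [show t + 9 - 10 + 1 = t by omega, show t + 6 - 7 + 1 = t by omega, choose_symm_add,
    choose_symm_add]
  have hC6 := choose_add_six_six_mod_four h16
  have hC9 := choose_add_nine_nine_mod_four h16
  refine ⟨⟨?_, by decide, ?_, by decide, by omega⟩, ⟨by omega, by omega, by omega, by omega⟩, ?_⟩
  · rw [Nat.even_iff]; omega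
  · rw [Nat.odd_iff]; omega
  · exact choose_dvd_choose_add_add
      (ascFactorial_seven_three_dvd (by omega) (by omega) (by omega))

/-- For a positive integer `r` with `r ≡ -1, -2, 3 (mod 9)` and
`r ≡ 2, 1, -2 (mod 7)`, setting `m = 16r - 2`, `n = m - 3`, `k = 7`, `l = 10`:
(1) `m, l` are even, `n, k` are odd, and `m - l = n - k`;
(2) 2 divides both `C(m, m-l+1)` and `C(n, n-k+1)`, but 4 divides neither;
(3) `C(n, n-k+1)` divides `C(m, m-l+1)`. -/
theorem statement3 (r : ℕ) (hr : 1 ≤ r)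
    (h9 : r % 9 = 8 ∨ r % 9 = 7 ∨ r % 9 = 3)
    (h7 : r % 7 = 2 ∨ r % 7 = 1 ∨ r % 7 = 5)
    (m n k l : ℕ) (hm : m = 16 * r - 2) (hn : n = m - 3) (hk : k = 7) (hl : l = 10) :
    (Even m ∧ Even l ∧ Odd n ∧ Odd k ∧ m - l = n - k) ∧
    (2 ∣ Nat.choose m (m - l + 1) ∧ 2 ∣ Nat.choose n (n - k + 1) ∧
      ¬ 4 ∣ Nat.choose m (m - l + 1) ∧ ¬ 4 ∣ Nat.choose n (n - k + 1)) ∧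
    Nat.choose n (n - k + 1) ∣ Nat.choose m (m - l + 1) :=
  statement3_general r h9 h7 m n k l hm hn hk hl
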